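/- arXiv:2312.12182 — 3 statements merged into one kernel-verified Lean document; each statement's English description precedes it below -/
import Mathlib

section
/- Let h be an Euler element of 𝔤 and set 𝔫 := 𝔤₁(h) + 𝔤₋₁(h) + [𝔤₁(h), 𝔤₋₁(h)]. Then: (i) 𝔫 is a Lie ideal of 𝔤; (ii) [h,x] ∈ 𝔫 for every x ∈ 𝔤 (so the image of h is central in the quotient Lie algebra 𝔤/𝔫); (iii) if I is any Lie ideal of 𝔤 such that for every x ∈ 𝔤 the condition [h,x] − x ∈ I implies x ∈ I and the condition [h,x] + x ∈ I implies x ∈ I (i.e., the eigenspaces of the adjoint map of the image of h in 𝔤/I for the eigenvalues 1 and −1 are trivial), then 𝔫 ⊆ I. In particular, 𝔫 is the smallest Lie ideal of 𝔤 with these properties. -/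
/-- The `ν`-eigenspace `𝔤_ν(h) = ker(ad h − ν·id)` of `ad h`. -/
noncomputable def adEig {L : Type*} [LieRing L] [LieAlgebra ℝ L] (h : L) (ν : ℝ) :
    Submodule ℝ L :=
  Module.End.eigenspace (LieAlgebra.ad ℝ L h) ν

/-- For subspaces `a`, `b` of `𝔤`, `[a,b]` is the linear span of all brackets
`⁅x,y⁆` with `x ∈ a`, `y ∈ b`. -/
def bracketSpan {L : Type*} [LieRing L] [LieAlgebra ℝ L] (a b : Submodule ℝ L) :
    Submodule ℝ L :=
  Submodule.span ℝ {z : L | ∃ x ∈ a, ∃ y ∈ b, z = ⁅x, y⁆}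

/-- `h` is an Euler element: `ad h ≠ 0` and `ad h` is diagonalizable with all
eigenvalues in `{−1,0,1}`, i.e. `𝔤 = 𝔤₁(h) ⊕ 𝔤₀(h) ⊕ 𝔤₋₁(h)` (the eigenspaces
for distinct eigenvalues are automatically independent). -/
def IsEulerElement {L : Type*} [LieRing L] [LieAlgebra ℝ L] (h : L) : Prop :=
  LieAlgebra.ad ℝ L h ≠ 0 ∧ adEig h 1 ⊔ adEig h 0 ⊔ adEig h (-1) = ⊤

/-- A submodule is a Lie ideal if it absorbs brackets. -/
def IsLieIdealSub {L : Type*} [LieRing L] [LieAlgebra ℝ L] (I : Submodule ℝ L) : Prop :=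
  ∀ x : L, ∀ y ∈ I, ⁅x, y⁆ ∈ I

/-- `𝔫 := 𝔤₁(h) + 𝔤₋₁(h) + [𝔤₁(h), 𝔤₋₁(h)]`. -/
noncomputable def eulerIdeal {L : Type*} [LieRing L] [LieAlgebra ℝ L] (h : L) :
    Submodule ℝ L :=
  adEig h 1 ⊔ adEig h (-1) ⊔ bracketSpan (adEig h 1) (adEig h (-1))

section Aux

variable {L : Type*} [LieRing L] [LieAlgebra ℝ L]

lemma mem_adEig_iff {h x : L} {ν : ℝ} : x ∈ adEig h ν ↔ ⁅h, x⁆ = ν • x := by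
  rw [adEig, Module.End.mem_eigenspace_iff, LieAlgebra.ad_apply]

lemma adEig_bracket {h x y : L} {α β : ℝ} (hx : x ∈ adEig h α) (hy : y ∈ adEig h β) :
    ⁅x, y⁆ ∈ adEig h (α + β) := by
  rw [mem_adEig_iff] at *
  rw [leibniz_lie, hx, hy, smul_lie, lie_smul, add_smul]

lemma adEig_bracket' {h x y : L} {α β γ : ℝ} (e : α + β = γ)
    (hx : x ∈ adEig h α) (hy : y ∈ adEig h β) : ⁅x, y⁆ ∈ adEig h γ :=
  e ▸ adEig_bracket hx hy

lemma euler_decomp {h : L} (hE : IsEulerElement h) (x : L) :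
    ∃ a ∈ adEig h 1, ∃ b ∈ adEig h 0, ∃ c ∈ adEig h (-1), x = a + b + c := by
  have hx : x ∈ adEig h 1 ⊔ adEig h 0 ⊔ adEig h (-1) := hE.2 ▸ Submodule.mem_top
  obtain ⟨p, hp, c, hc, rfl⟩ := Submodule.mem_sup.mp hx
  obtain ⟨a, ha, b, hb, rfl⟩ := Submodule.mem_sup.mp hp
  exact ⟨a, ha, b, hb, c, hc, rfl⟩

lemma adEig_zero {h : L} (hE : IsEulerElement h) {ν : ℝ} (hν : ν * (ν - 1) * (ν + 1) ≠ 0)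
    {x : L} (hx : x ∈ adEig h ν) : x = 0 := by
  obtain ⟨a, ha, b, hb, c, hc, hdec⟩ := euler_decomp hE x
  rw [mem_adEig_iff] at ha hb hc hx
  rw [one_smul] at ha
  rw [zero_smul] at hb
  rw [neg_one_smul] at hc
  have e1 : ν • x = a - c := by
    rw [← hx, hdec, lie_add, lie_add, ha, hb, hc]; abel
  have e2 : ν • (ν • x) = a + c := by
    calc ν • (ν • x) = ν • ⁅h, x⁆ := by rw [hx]
      _ = ⁅h, ν • x⁆ := (lie_smul ν h x).symm
      _ = ⁅h, a - c⁆ := by rw [e1]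
      _ = a + c := by rw [lie_sub, ha, hc]; abel
  have e3 : ν • (ν • (ν • x)) = ν • x := by
    calc ν • (ν • (ν • x)) = ν • (ν • ⁅h, x⁆) := by rw [hx]
      _ = ⁅h, ν • (ν • x)⁆ := by rw [lie_smul, lie_smul]
      _ = ⁅h, a + c⁆ := by rw [e2]
      _ = a - c := by rw [lie_add, ha, hc]; abel
      _ = ν • x := e1.symm
  rw [smul_smul, smul_smul] at e3
  have e4 : (ν * ν * ν - ν) • x = 0 := by rw [sub_smul, e3, sub_self]
  have hne : ν * ν * ν - ν ≠ 0 := by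
    intro hh; apply hν; nlinarith [hh]
  exact (smul_eq_zero.mp e4).resolve_left hne

lemma key_bracket {h : L} (hE : IsEulerElement h) {z : L}
    (hz : z ∈ adEig h 1 ∨ z ∈ adEig h 0 ∨ z ∈ adEig h (-1)) :
    ∀ n ∈ eulerIdeal h, ⁅z, n⁆ ∈ eulerIdeal h := by
  have na1 : adEig h 1 ≤ eulerIdeal h := le_sup_of_le_left le_sup_left
  have nam : adEig h (-1) ≤ eulerIdeal h := le_sup_of_le_left le_sup_right
  have nb : bracketSpan (adEig h 1) (adEig h (-1)) ≤ eulerIdeal h := le_sup_right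
  have mem_bs : ∀ {x y : L}, x ∈ adEig h 1 → y ∈ adEig h (-1) →
      ⁅x, y⁆ ∈ bracketSpan (adEig h 1) (adEig h (-1)) := fun hx hy =>
    Submodule.subset_span ⟨_, hx, _, hy, rfl⟩
  -- action on the three pieces
  have c1 : ∀ p ∈ adEig h 1, ⁅z, p⁆ ∈ eulerIdeal h := by
    intro p hp
    rcases hz with hz | hz | hz
    · have : ⁅z, p⁆ = 0 := adEig_zero hE (by norm_num) (adEig_bracket' rfl hz hp)
      rw [this]; exact zero_mem _
    · exact na1 (adEig_bracket' (by norm_num) hz hp)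
    · rw [← lie_skew]; exact neg_mem (nb (mem_bs hp hz))
  have c2 : ∀ q ∈ adEig h (-1), ⁅z, q⁆ ∈ eulerIdeal h := by
    intro q hq
    rcases hz with hz | hz | hz
    · exact nb (mem_bs hz hq)
    · exact nam (adEig_bracket' (by norm_num) hz hq)
    · have : ⁅z, q⁆ = 0 :=
        adEig_zero hE (ν := -2) (by norm_num) (adEig_bracket' (by norm_num) hz hq)
      rw [this]; exact zero_mem _
  have c3 : ∀ r ∈ bracketSpan (adEig h 1) (adEig h (-1)), ⁅z, r⁆ ∈ eulerIdeal h := by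
    intro r hr
    induction hr using Submodule.span_induction with
    | mem w hw =>
      obtain ⟨x, hx, y, hy, rfl⟩ := hw
      rw [leibniz_lie]
      refine add_mem ?_ ?_
      · -- ⁅⁅z,x⁆, y⁆
        rcases hz with hz | hz | hz
        · have : ⁅z, x⁆ = 0 := adEig_zero hE (by norm_num) (adEig_bracket' rfl hz hx)
          rw [this, zero_lie]; exact zero_mem _
        · exact nb (mem_bs (adEig_bracket' (by norm_num) hz hx) hy)
        · exact nam (adEig_bracket' (show (0:ℝ) + (-1) = -1 by norm_num)
            (adEig_bracket' (show (-1:ℝ) + 1 = 0 by norm_num) hz hx) hy)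
      · -- ⁅x, ⁅z,y⁆⁆
        rcases hz with hz | hz | hz
        · exact na1 (adEig_bracket' (show (1:ℝ) + 0 = 1 by norm_num) hx
            (adEig_bracket' (show (1:ℝ) + (-1) = 0 by norm_num) hz hy))
        · exact nb (mem_bs hx (adEig_bracket' (by norm_num) hz hy))
        · have : ⁅z, y⁆ = 0 :=
            adEig_zero hE (ν := -2) (by norm_num) (adEig_bracket' (by norm_num) hz hy)
          rw [this, lie_zero]; exact zero_mem _
    | zero => rw [lie_zero]; exact zero_mem _
    | add u v hu hv ihu ihv => rw [lie_add]; exact add_mem ihu ihv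
    | smul t u hu ihu => rw [lie_smul]; exact Submodule.smul_mem _ _ ihu
  intro n hn
  obtain ⟨p, hp, r, hr, rfl⟩ := Submodule.mem_sup.mp hn
  obtain ⟨p1, hp1, pm, hpm, rfl⟩ := Submodule.mem_sup.mp hp
  rw [lie_add, lie_add]
  exact add_mem (add_mem (c1 _ hp1) (c2 _ hpm)) (c3 _ hr)

end Aux

/-- `𝔫 := 𝔤₁(h) + 𝔤₋₁(h) + [𝔤₁(h), 𝔤₋₁(h)]` is a Lie ideal of `𝔤`,
the image of `h` in `𝔤/𝔫` is central (i.e. `[h,x] ∈ 𝔫` for all `x`), and `𝔫` is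
contained in every Lie ideal `I` for which the `±1`-eigenspaces of the induced
map `ad h` on `𝔤/I` are trivial. -/
theorem eulerIdeal_isLieIdeal_central_smallest
    {L : Type*} [LieRing L] [LieAlgebra ℝ L] [FiniteDimensional ℝ L]
    (h : L) (hE : IsEulerElement h) :
    IsLieIdealSub (eulerIdeal h) ∧
    (∀ x : L, ⁅h, x⁆ ∈ eulerIdeal h) ∧
    (∀ I : Submodule ℝ L, IsLieIdealSub I →
      (∀ x : L, ⁅h, x⁆ - x ∈ I → x ∈ I) →
      (∀ x : L, ⁅h, x⁆ + x ∈ I → x ∈ I) →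
      eulerIdeal h ≤ I) := by
  have na1 : adEig h 1 ≤ eulerIdeal h := le_sup_of_le_left le_sup_left
  have nam : adEig h (-1) ≤ eulerIdeal h := le_sup_of_le_left le_sup_right
  refine ⟨?_, ?_, ?_⟩
  · -- ideal
    intro x n hn
    obtain ⟨a, ha, b, hb, c, hc, rfl⟩ := euler_decomp hE x
    rw [add_lie, add_lie]
    exact add_mem
      (add_mem (key_bracket hE (Or.inl ha) n hn) (key_bracket hE (Or.inr (Or.inl hb)) n hn))
      (key_bracket hE (Or.inr (Or.inr hc)) n hn)
  · -- central
    intro x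
    obtain ⟨a, ha, b, hb, c, hc, rfl⟩ := euler_decomp hE x
    have ha' := mem_adEig_iff.mp ha
    have hb' := mem_adEig_iff.mp hb
    have hc' := mem_adEig_iff.mp hc
    rw [one_smul] at ha'
    rw [zero_smul] at hb'
    rw [neg_one_smul] at hc'
    have : ⁅h, a + b + c⁆ = a - c := by rw [lie_add, lie_add, ha', hb', hc']; abel
    rw [this]
    exact sub_mem (na1 ha) (nam hc)
  · -- smallest
    intro I hI h1 hm1
    have i1 : adEig h 1 ≤ I := by
      intro x hx
      have hx' := mem_adEig_iff.mp hx
      rw [one_smul] at hx'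
      exact h1 x (by rw [hx', sub_self]; exact zero_mem _)
    have im1 : adEig h (-1) ≤ I := by
      intro x hx
      have hx' := mem_adEig_iff.mp hx
      rw [neg_one_smul] at hx'
      exact hm1 x (by rw [hx', neg_add_cancel]; exact zero_mem _)
    have ibs : bracketSpan (adEig h 1) (adEig h (-1)) ≤ I := by
      rw [bracketSpan, Submodule.span_le]
      rintro w ⟨x, hx, y, hy, rfl⟩
      exact hI x _ (im1 hy)
    exact sup_le (sup_le i1 im1) ibs
end

section
/- Let h be an Euler element of 𝔤. Then the following are equivalent: (a) h ∈ [𝔤₁(h), 𝔤₋₁(h)]; (b) every Lie ideal 𝔫 of 𝔤 satisfying [h,x] ∈ 𝔫 for all x ∈ 𝔤 (i.e., such that the image of h in the quotient 𝔤/𝔫 is central) contains h. -/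
section Aux

variable {L : Type*} [LieRing L] [LieAlgebra ℝ L]

lemma bracket_mem_adEig {h x y : L} {a b : ℝ} (hx : x ∈ adEig h a) (hy : y ∈ adEig h b) :
    ⁅x, y⁆ ∈ adEig h (a + b) := by
  rw [mem_adEig_iff] at *
  rw [leibniz_lie, hx, hy, smul_lie, lie_smul, add_smul]

lemma bracket_mem_adEig' {h x y : L} {a b c : ℝ} (hx : x ∈ adEig h a) (hy : y ∈ adEig h b)
    (habc : a + b = c) : ⁅x, y⁆ ∈ adEig h c :=
  habc ▸ bracket_mem_adEig hx hy

lemma adEig_eq_bot {h : L} (hsup : adEig h 1 ⊔ adEig h 0 ⊔ adEig h (-1) = ⊤)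
    {ν : ℝ} (h1 : ν ≠ 1) (h0 : ν ≠ 0) (hm : ν ≠ -1) : adEig h ν = ⊥ := by
  have hd : Disjoint (adEig h ν)
      (⨆ μ ∈ ({1, 0, -1} : Set ℝ), Module.End.eigenspace (LieAlgebra.ad ℝ L h) μ) :=
    (Module.End.eigenspaces_iSupIndep _).disjoint_biSup (by
      simp only [Set.mem_insert_iff, Set.mem_singleton_iff]
      push_neg
      exact ⟨h1, h0, hm⟩)
  have hle : (⊤ : Submodule ℝ L) ≤
      ⨆ μ ∈ ({1, 0, -1} : Set ℝ), Module.End.eigenspace (LieAlgebra.ad ℝ L h) μ := by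
    rw [← hsup]
    refine sup_le (sup_le ?_ ?_) ?_ <;>
      exact le_biSup _ (by simp)
  rw [← le_bot_iff]
  exact hd.mono_right hle |>.le_bot.trans' (le_inf le_rfl le_top)

end Aux

/-- for an Euler element `h`, the following are equivalent:
(a) `h ∈ [𝔤₁(h), 𝔤₋₁(h)]`;
(b) every Lie ideal `𝔫` of `𝔤` such that the image of `h` in `𝔤/𝔫` is central
    (i.e. `[h,x] ∈ 𝔫` for all `x ∈ 𝔤`) contains `h`. -/
theorem mem_bracketSpan_iff_mem_all_central_ideals
    {L : Type*} [LieRing L] [LieAlgebra ℝ L] [FiniteDimensional ℝ L]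
    (h : L) (hE : IsEulerElement h) :
    h ∈ bracketSpan (adEig h 1) (adEig h (-1)) ↔
      ∀ I : Submodule ℝ L, IsLieIdealSub I → (∀ x : L, ⁅h, x⁆ ∈ I) → h ∈ I := by
  obtain ⟨-, hsup⟩ := hE
  have h2 : adEig h 2 = ⊥ := adEig_eq_bot hsup (by norm_num) (by norm_num) (by norm_num)
  have hm2 : adEig h (-2) = ⊥ := adEig_eq_bot hsup (by norm_num) (by norm_num) (by norm_num)
  constructor
  · -- (a) ⇒ (b)
    intro hmem I hI hcen
    refine Submodule.span_le.mpr ?_ hmem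
    rintro z ⟨x, hx, y, hy, rfl⟩
    -- x ∈ g₁ lies in I since x = ⁅h,x⁆ ∈ I
    have hxI : x ∈ I := by
      have := hcen x
      rwa [mem_adEig_iff.mp hx, one_smul] at this
    have : ⁅y, x⁆ ∈ I := hI y x hxI
    have := I.neg_mem this
    rwa [← lie_skew, neg_neg] at this
  · -- (b) ⇒ (a)
    intro hb
    set B := bracketSpan (adEig h 1) (adEig h (-1)) with hB
    set I : Submodule ℝ L := adEig h 1 ⊔ adEig h (-1) ⊔ B with hIdef
    have hBle : B ≤ adEig h 0 := by
      refine Submodule.span_le.mpr ?_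
      rintro z ⟨x, hx, y, hy, rfl⟩
      exact bracket_mem_adEig' hx hy (by norm_num)
    have h1le : adEig h 1 ≤ I := le_trans le_sup_left le_sup_left
    have hmle : adEig h (-1) ≤ I := le_trans le_sup_right le_sup_left
    have hBleI : B ≤ I := le_sup_right
    -- brackets of eigenvectors with elements of I
    have key : ∀ a : ℝ, a = 1 ∨ a = 0 ∨ a = -1 → ∀ x ∈ adEig h a, ∀ y ∈ I, ⁅x, y⁆ ∈ I := by
      intro a ha x hx y hy
      rw [hIdef, Submodule.mem_sup] at hy
      obtain ⟨y₁, hy₁, yb, hyb, rfl⟩ := hy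
      rw [Submodule.mem_sup] at hy₁
      obtain ⟨u, hu, v, hv, rfl⟩ := hy₁
      rw [lie_add, lie_add]
      refine I.add_mem (I.add_mem ?_ ?_) ?_
      · -- u ∈ g₁
        rcases ha with rfl | rfl | rfl
        · have hz : ⁅x, u⁆ ∈ adEig h 2 := bracket_mem_adEig' hx hu (by norm_num)
          rw [h2, Submodule.mem_bot] at hz
          simp [hz]
        · exact h1le (bracket_mem_adEig' hx hu (by norm_num))
        · have : ⁅u, x⁆ ∈ B := Submodule.subset_span ⟨u, hu, x, hx, rfl⟩
          have := I.neg_mem (hBleI this)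
          rwa [← lie_skew, neg_neg] at this
      · -- v ∈ g₋₁
        rcases ha with rfl | rfl | rfl
        · exact hBleI (Submodule.subset_span ⟨x, hx, v, hv, rfl⟩)
        · exact hmle (bracket_mem_adEig' hx hv (by norm_num))
        · have hz : ⁅x, v⁆ ∈ adEig h (-2) := bracket_mem_adEig' hx hv (by norm_num)
          rw [hm2, Submodule.mem_bot] at hz
          simp [hz]
      · -- yb ∈ B
        induction hyb using Submodule.span_induction with
        | mem z hz =>
          obtain ⟨u, hu, v, hv, rfl⟩ := hz
          rw [leibniz_lie]
          refine I.add_mem ?_ ?_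
          · rcases ha with rfl | rfl | rfl
            · have hz : ⁅x, u⁆ ∈ adEig h 2 := bracket_mem_adEig' hx hu (by norm_num)
              rw [h2, Submodule.mem_bot] at hz
              simp [hz]
            · have hxu : ⁅x, u⁆ ∈ adEig h 1 := bracket_mem_adEig' hx hu (by norm_num)
              exact hBleI (Submodule.subset_span ⟨_, hxu, v, hv, rfl⟩)
            · have hxu : ⁅x, u⁆ ∈ adEig h 0 := bracket_mem_adEig' hx hu (by norm_num)
              exact hmle (bracket_mem_adEig' hxu hv (by norm_num))
          · rcases ha with rfl | rfl | rfl
            · have hxv : ⁅x, v⁆ ∈ adEig h 0 := bracket_mem_adEig' hx hv (by norm_num)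
              exact h1le (bracket_mem_adEig' hu hxv (by norm_num))
            · have hxv : ⁅x, v⁆ ∈ adEig h (-1) := bracket_mem_adEig' hx hv (by norm_num)
              exact hBleI (Submodule.subset_span ⟨u, hu, _, hxv, rfl⟩)
            · have hz : ⁅x, v⁆ ∈ adEig h (-2) := bracket_mem_adEig' hx hv (by norm_num)
              rw [hm2, Submodule.mem_bot] at hz
              simp [hz]
        | zero => simp
        | add z w _ _ hz hw => rw [lie_add]; exact I.add_mem hz hw
        | smul c z _ hz => rw [lie_smul]; exact I.smul_mem c hz
    have hIideal : IsLieIdealSub I := by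
      intro x y hy
      have hxtop : x ∈ adEig h 1 ⊔ adEig h 0 ⊔ adEig h (-1) := hsup ▸ Submodule.mem_top
      rw [Submodule.mem_sup] at hxtop
      obtain ⟨x₁, hx₁, xm, hxm, rfl⟩ := hxtop
      rw [Submodule.mem_sup] at hx₁
      obtain ⟨u, hu, v, hv, rfl⟩ := hx₁
      rw [add_lie, add_lie]
      exact I.add_mem (I.add_mem (key 1 (by norm_num) u hu y hy)
        (key 0 (by norm_num) v hv y hy)) (key (-1) (by norm_num) xm hxm y hy)
    have hcen : ∀ x : L, ⁅h, x⁆ ∈ I := by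
      intro x
      have hxtop : x ∈ adEig h 1 ⊔ adEig h 0 ⊔ adEig h (-1) := hsup ▸ Submodule.mem_top
      rw [Submodule.mem_sup] at hxtop
      obtain ⟨x₁, hx₁, xm, hxm, rfl⟩ := hxtop
      rw [Submodule.mem_sup] at hx₁
      obtain ⟨u, hu, v, hv, rfl⟩ := hx₁
      rw [lie_add, lie_add, mem_adEig_iff.mp hu, mem_adEig_iff.mp hv, mem_adEig_iff.mp hxm]
      refine I.add_mem (I.add_mem ?_ ?_) ?_
      · rw [one_smul]; exact h1le hu
      · simp
      · exact I.smul_mem _ (hmle hxm)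
    have hhI : h ∈ I := hb I hIideal hcen
    -- decompose h = a + b + c
    rw [hIdef, Submodule.mem_sup] at hhI
    obtain ⟨y₁, hy₁, c, hc, hsum⟩ := hhI
    rw [Submodule.mem_sup] at hy₁
    obtain ⟨a, ha, b, hbm, rfl⟩ := hy₁
    have hc0 : ⁅h, c⁆ = 0 := by
      have := mem_adEig_iff.mp (hBle hc)
      simpa using this
    have heq : (0 : L) = a - b := by
      have hz : ⁅h, a + b + c⁆ = 0 := by rw [hsum, lie_self]
      rw [lie_add, lie_add, mem_adEig_iff.mp ha, mem_adEig_iff.mp hbm, hc0,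
        one_smul, neg_smul, one_smul, add_zero] at hz
      rw [← hz]
      abel
    have hab : a = b := by
      have := heq.symm
      rw [sub_eq_zero] at this
      exact this
    -- a ∈ g₁ ∩ g₋₁ ⇒ a = 0
    have ha0 : a = 0 := by
      have e1 : ⁅h, a⁆ = a := by rw [mem_adEig_iff.mp ha, one_smul]
      have e2 : ⁅h, a⁆ = -a := by
        conv_lhs => rw [hab]
        rw [mem_adEig_iff.mp hbm, ← hab, neg_smul, one_smul]
      have hne : a = -a := e1.symm.trans e2
      have h2a : (2 : ℝ) • a = 0 := by
        rw [two_smul]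
        nth_rewrite 2 [hne]
        simp
      rcases smul_eq_zero.mp h2a with hc | hc
      · norm_num at hc
      · exact hc
    have hb0 : b = 0 := hab ▸ ha0
    rw [← hsum, ha0, hb0, zero_add, zero_add]
    exact hc
end

section
/- Let h be an Euler element of 𝔤 and, for t ∈ ℝ, let φ_t : 𝔤 → 𝔤 denote the linear map acting on the decomposition 𝔤 = 𝔤₁(h) ⊕ 𝔤₀(h) ⊕ 𝔤₋₁(h) by φ_t(x₁ + x₀ + x₋₁) = e^t x₁ + x₀ + e^{−t} x₋₁ (the flow of ad h). Let C ⊆ 𝔤 be a closed convex cone (a topologically closed set with 0 ∈ C, C + C ⊆ C and λC ⊆ C for all λ ≥ 0) satisfying φ_t(C) ⊆ C for all t ∈ ℝ. Then for every x ∈ C with components x = x₁ + x₀ + x₋₁ (x_ν ∈ 𝔤_ν(h)), one has x₁ ∈ C and x₋₁ ∈ C. -/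
/-- let `h` be an Euler element of the finite-dimensional real Lie
algebra `𝔤` (equipped with its canonical vector-space topology, characterized
here as any Hausdorff topology making `𝔤` a topological vector space).  Let
`C ⊆ 𝔤` be a closed convex cone that is invariant under the flow
`φ_t(x₁ + x₀ + xneg₁) = e^t x₁ + x₀ + e^{−t} xneg₁` of `ad h`.  Then for every
`x = x₁ + x₀ + xneg₁ ∈ C` with `x_ν ∈ 𝔤_ν(h)` one has `x₁ ∈ C` and `xneg₁ ∈ C`. -/
theorem cone_components_mem
    {L : Type*} [LieRing L] [LieAlgebra ℝ L] [FiniteDimensional ℝ L]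
    [TopologicalSpace L] [IsTopologicalAddGroup L] [ContinuousSMul ℝ L] [T2Space L]
    (h : L) (hE : IsEulerElement h) (C : Set L)
    (hC_closed : IsClosed C) (hC_zero : (0 : L) ∈ C)
    (hC_add : ∀ x ∈ C, ∀ y ∈ C, x + y ∈ C)
    (hC_smul : ∀ c : ℝ, 0 ≤ c → ∀ x ∈ C, c • x ∈ C)
    (hC_flow : ∀ t : ℝ, ∀ y₁ ∈ adEig h 1, ∀ y₀ ∈ adEig h 0, ∀ yneg ∈ adEig h (-1),
      y₁ + y₀ + yneg ∈ C → Real.exp t • y₁ + y₀ + Real.exp (-t) • yneg ∈ C) :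
    ∀ x₁ ∈ adEig h 1, ∀ x₀ ∈ adEig h 0, ∀ xneg ∈ adEig h (-1),
      x₁ + x₀ + xneg ∈ C → x₁ ∈ C ∧ xneg ∈ C := by
  intro x₁ hx₁ x₀ hx₀ xneg hxneg hx
  have e0 : Filter.Tendsto (fun t : ℝ => Real.exp (-t)) Filter.atTop (nhds 0) :=
    Real.tendsto_exp_atBot.comp Filter.tendsto_neg_atTop_atBot
  have e2 : Filter.Tendsto (fun t : ℝ => Real.exp (-(2*t))) Filter.atTop (nhds 0) := by
    have : Filter.Tendsto (fun t : ℝ => 2*t) Filter.atTop Filter.atTop :=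
      Filter.Tendsto.const_mul_atTop two_pos Filter.tendsto_id
    exact Real.tendsto_exp_atBot.comp (Filter.tendsto_neg_atTop_atBot.comp this)
  constructor
  · have key : ∀ t : ℝ, x₁ + Real.exp (-t) • x₀ + Real.exp (-(2*t)) • xneg ∈ C := by
      intro t
      have h1 := hC_flow t x₁ hx₁ x₀ hx₀ xneg hxneg hx
      have h2 := hC_smul (Real.exp (-t)) (Real.exp_pos _).le _ h1
      have : Real.exp (-t) • (Real.exp t • x₁ + x₀ + Real.exp (-t) • xneg)
          = x₁ + Real.exp (-t) • x₀ + Real.exp (-(2*t)) • xneg := by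
        rw [smul_add, smul_add, smul_smul, smul_smul, ← Real.exp_add, ← Real.exp_add]
        ring_nf
        simp
      rwa [this] at h2
    have lim : Filter.Tendsto
        (fun t : ℝ => x₁ + Real.exp (-t) • x₀ + Real.exp (-(2*t)) • xneg)
        Filter.atTop (nhds x₁) := by
      have := ((tendsto_const_nhds : Filter.Tendsto (fun _ : ℝ => x₁) Filter.atTop (nhds x₁)).add
        (e0.smul_const x₀)).add (e2.smul_const xneg)
      simpa using this
    exact hC_closed.mem_of_tendsto lim (Filter.Eventually.of_forall key)
  · have key : ∀ t : ℝ, Real.exp (-(2*t)) • x₁ + Real.exp (-t) • x₀ + xneg ∈ C := by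
      intro t
      have h1 := hC_flow (-t) x₁ hx₁ x₀ hx₀ xneg hxneg hx
      have h2 := hC_smul (Real.exp (-t)) (Real.exp_pos _).le _ h1
      have : Real.exp (-t) • (Real.exp (-t) • x₁ + x₀ + Real.exp (-(-t)) • xneg)
          = Real.exp (-(2*t)) • x₁ + Real.exp (-t) • x₀ + xneg := by
        rw [smul_add, smul_add, smul_smul, smul_smul, ← Real.exp_add, ← Real.exp_add]
        ring_nf
        simp
      rwa [this] at h2
    have lim : Filter.Tendsto
        (fun t : ℝ => Real.exp (-(2*t)) • x₁ + Real.exp (-t) • x₀ + xneg)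
        Filter.atTop (nhds xneg) := by
      have := ((e2.smul_const x₁).add (e0.smul_const x₀)).add
        (tendsto_const_nhds : Filter.Tendsto (fun _ : ℝ => xneg) Filter.atTop (nhds xneg))
      simpa using this
    exact hC_closed.mem_of_tendsto lim (Filter.Eventually.of_forall key)
end
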